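/- Let h be a positive integer, S an inverse-closed subset of Z_{4h} not containing 0, and K a subgroup of Z_{4h} whose order is twice an odd integer; set K_o = K \ 2K. If (S \ K_o) + ⟨h⟩ ⊆ S ∪ K_o, then the Cayley graph Cay(Z_{4h}, (S \ {2h}) + 2h) has an automorphism fixing 0 but moving 2h. -/

import Mathlib

/-!
Put `t = 2h` and `L = 2K`. As `|K| = 2k` with `k` odd, `K` contains the unique involution `t` of
`ℤ_{4h}` but no element of order 4, such as `h`; hence `K_o = L + t`. Translating the coset `t + L`
onto `h + L` and back, and fixing every other point, gives a permutation fixing `0` and moving `t`.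
It leaves `x - y` unchanged when `x - y ∈ L`, and otherwise changes it by an element of `⟨h⟩`
without entering `L`; by the hypothesis on `S`, such changes keep `(S \ {t}) + t` invariant.
-/

open SimpleGraph Pointwise

/-- `2K = {2k : k ∈ K}` for a subgroup `K`. -/
def twoMul {n : ℕ} (K : AddSubgroup (ZMod n)) : Set (ZMod n) :=
  (fun k => 2 * k) '' (K : Set (ZMod n))

/-- `K_o = K \ 2K`. -/
def oddPart {n : ℕ} (K : AddSubgroup (ZMod n)) : Set (ZMod n) :=
  (K : Set (ZMod n)) \ twoMul K

theorem ZMod.two_nsmul_eq_zero_iff {n m : ℕ} [NeZero m] (hn : n = 2 * m) (x : ZMod n) :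
    2 • x = 0 ↔ x = 0 ∨ x = m := by
  subst hn
  constructor
  · intro hx
    have hdvd : m ∣ x.val := by
      rw [← Nat.mul_dvd_mul_iff_left two_pos, ← ZMod.natCast_eq_zero_iff]
      simpa [two_nsmul, two_mul] using hx
    obtain ⟨q, hq⟩ := hdvd
    have hq2 : q < 2 := by
      have := x.val_lt
      rw [hq] at this
      exact lt_of_mul_lt_mul_left (this.trans_eq (mul_comm 2 m)) (Nat.zero_le m)
    interval_cases q
    · left; simpa using hq
    · right; rw [← ZMod.natCast_zmod_val x, hq, mul_one]
  · rintro (rfl | rfl)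
    · exact nsmul_zero 2
    · rw [two_nsmul, ← Nat.cast_add, ← two_mul, ZMod.natCast_self]

section OddOrder

variable {G : Type*} [AddCommGroup G] {K : AddSubgroup G} {k : ℕ} {t : G}

theorem AddSubgroup.notMem_of_four_nsmul_eq_zero (hk : Odd k) (hK : Nat.card K = 2 * k)
    {x : G} (h2 : 2 • x ≠ 0) (h4 : 4 • x = 0) : x ∉ K := by
  intro hx
  have h := K.addOrderOf_dvd_natCard hx
  rw [addOrderOf_eq_prime_pow (p := 2) (n := 1) (by simpa using h2) (by simpa using h4),
    hK] at h
  obtain ⟨j, rfl⟩ := hk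
  omega

theorem AddSubgroup.mem_of_two_dvd_natCard [Finite K] (h2 : 2 ∣ Nat.card K)
    (ht : ∀ x : G, 2 • x = 0 → x = 0 ∨ x = t) : t ∈ K := by
  obtain ⟨g, hg⟩ := exists_prime_addOrderOf_dvd_card' 2 h2
  have hg0 : (g : G) ≠ 0 := by
    intro h
    simp [ZeroMemClass.coe_eq_zero.mp h] at hg
  have hg2 : 2 • (g : G) = 0 := by
    rw [← AddSubgroup.addOrderOf_coe] at hg
    exact hg ▸ addOrderOf_nsmul_eq_zero _
  exact (ht g hg2).resolve_left hg0 ▸ g.2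

theorem AddSubgroup.exists_two_nsmul_eq_or_eq_add (hk : Odd k) (hK : Nat.card K = 2 * k)
    (ht : ∀ x : G, 2 • x = 0 → x = 0 ∨ x = t) {u : G} (hu : u ∈ K) :
    ∃ c ∈ K, 2 • c = u ∨ 2 • c = u + t := by
  obtain ⟨j, rfl⟩ := hk
  have hku : 2 • ((2 * j + 1) • u) = 0 := by
    rw [← mul_nsmul', ← hK, ← addOrderOf_dvd_iff_nsmul_eq_zero]
    exact K.addOrderOf_dvd_natCard hu
  refine ⟨(j + 1) • u, K.nsmul_mem hu _, ?_⟩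
  have hc : 2 • (j + 1) • u = u + (2 * j + 1) • u := by
    rw [← mul_nsmul', ← succ_nsmul']
    ring_nf
  rcases ht _ hku with h | h <;> simp [hc, h]

end OddOrder

section TwoMul

variable {n : ℕ} {K : AddSubgroup (ZMod n)} {k : ℕ} {t : ZMod n}

def twoMulSubgroup (K : AddSubgroup (ZMod n)) : AddSubgroup (ZMod n) :=
  K.map (AddMonoidHom.mulLeft 2)

theorem twoMulSubgroup_le : twoMulSubgroup K ≤ K := by
  rintro _ ⟨x, hx, rfl⟩
  simpa [two_mul] using add_mem hx hx

theorem mem_twoMul_iff {u : ZMod n} : u ∈ twoMul K ↔ ∃ c ∈ K, 2 • c = u := by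
  simp [twoMul, nsmul_eq_mul]

theorem zero_notMem_oddPart (K : AddSubgroup (ZMod n)) : (0 : ZMod n) ∉ oddPart K :=
  fun h0 => h0.2 ⟨0, K.zero_mem, mul_zero 2⟩

theorem mem_oddPart_iff (hk : Odd k) (hK : Nat.card K = 2 * k)
    (ht : ∀ x : ZMod n, 2 • x = 0 ↔ x = 0 ∨ x = t) (ht0 : t ≠ 0) (u : ZMod n) :
    u ∈ oddPart K ↔ u + t ∈ twoMul K := by
  have : Finite K := Nat.finite_of_card_ne_zero (by obtain ⟨j, rfl⟩ := hk; omega)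
  have htK : t ∈ K := K.mem_of_two_dvd_natCard ⟨k, hK⟩ fun x => (ht x).mp
  have htt : 2 • t = 0 := (ht t).mpr (Or.inr rfl)
  have h2K : ∀ c ∈ K, 2 • c ≠ t := fun c hc hct =>
    K.notMem_of_four_nsmul_eq_zero hk hK (hct ▸ ht0)
      ((mul_nsmul c 2 2).trans (by rw [hct, htt])) hc
  simp only [oddPart, Set.mem_sdiff, SetLike.mem_coe, mem_twoMul_iff]
  constructor
  · rintro ⟨huK, hu2⟩
    obtain ⟨c, hc, hcu | hcu⟩ := K.exists_two_nsmul_eq_or_eq_add hk hK (fun x => (ht x).mp) huK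
    · exact absurd ⟨c, hc, hcu⟩ hu2
    · exact ⟨c, hc, hcu⟩
  · rintro ⟨c, hc, hcu⟩
    have hu : u = 2 • c + t := by
      rw [hcu, add_assoc, ← two_nsmul, htt, add_zero]
    refine ⟨hu ▸ add_mem (K.nsmul_mem hc 2) htK, ?_⟩
    rintro ⟨d, hd, hdu⟩
    exact h2K (c - d) (sub_mem hc hd) (by rw [nsmul_sub, hdu, hcu, add_sub_cancel_left])

end TwoMul

section CosetSwap

variable {G : Type*} [AddCommGroup G] (L : AddSubgroup G) (a b : G)

open Classical in
noncomputable def cosetSwap (x : G) : G :=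
  if (x : G ⧸ L) = a then x + (b - a) else if (x : G ⧸ L) = b then x - (b - a) else x

variable {L a b} {x : G}

theorem cosetSwap_of_mk_eq_left (hxa : (x : G ⧸ L) = a) : cosetSwap L a b x = x + (b - a) :=
  if_pos hxa

theorem cosetSwap_of_mk_eq_right (hxa : (x : G ⧸ L) ≠ a) (hxb : (x : G ⧸ L) = b) :
    cosetSwap L a b x = x - (b - a) :=
  (if_neg hxa).trans (if_pos hxb)

theorem cosetSwap_of_mk_ne (hxa : (x : G ⧸ L) ≠ a) (hxb : (x : G ⧸ L) ≠ b) :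
    cosetSwap L a b x = x :=
  (if_neg hxa).trans (if_neg hxb)

open Classical in
theorem mk_cosetSwap (x : G) :
    ((cosetSwap L a b x : G) : G ⧸ L) = Equiv.swap (a : G ⧸ L) b x := by
  rw [Equiv.swap_apply_def]
  by_cases hxa : (x : G ⧸ L) = a
  · simp [cosetSwap_of_mk_eq_left hxa, hxa]
  by_cases hxb : (x : G ⧸ L) = b
  · have hba : (b : G ⧸ L) ≠ a := hxb ▸ hxa
    simp [cosetSwap_of_mk_eq_right hxa hxb, hxb, hba]
  · simp [cosetSwap_of_mk_ne hxa hxb, hxa, hxb]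

theorem cosetSwap_left : cosetSwap L a b a = b := by
  rw [cosetSwap_of_mk_eq_left rfl, add_sub_cancel]

theorem cosetSwap_zero (ha : a ∉ L) (hb : b ∉ L) : cosetSwap L a b 0 = 0 := by
  refine cosetSwap_of_mk_ne ?_ ?_ <;>
    rwa [Ne, QuotientAddGroup.eq_iff_sub_mem, zero_sub, neg_mem_iff]

theorem cosetSwap_sub_self_mem {H : AddSubgroup G} (hab : b - a ∈ H) (x : G) :
    cosetSwap L a b x - x ∈ H := by
  by_cases hxa : (x : G ⧸ L) = a
  · simpa [cosetSwap_of_mk_eq_left hxa]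
  by_cases hxb : (x : G ⧸ L) = b
  · simpa [cosetSwap_of_mk_eq_right hxa hxb] using neg_mem hab
  · simp [cosetSwap_of_mk_ne hxa hxb]

theorem cosetSwap_sub_self_eq_of_mk_eq {y : G} (hxy : (x : G ⧸ L) = y) :
    cosetSwap L a b x - x = cosetSwap L a b y - y := by
  by_cases hxa : (x : G ⧸ L) = a
  · rw [cosetSwap_of_mk_eq_left hxa, cosetSwap_of_mk_eq_left (hxy ▸ hxa)]
    abel
  by_cases hxb : (x : G ⧸ L) = b
  · rw [cosetSwap_of_mk_eq_right hxa hxb, cosetSwap_of_mk_eq_right (hxy ▸ hxa) (hxy ▸ hxb)]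
    abel
  · rw [cosetSwap_of_mk_ne hxa hxb, cosetSwap_of_mk_ne (hxy ▸ hxa) (hxy ▸ hxb), sub_self,
      sub_self]

theorem cosetSwap_involutive (hab : b - a ∉ L) : Function.Involutive (cosetSwap L a b) := by
  replace hab : (a : G ⧸ L) ≠ b := fun he =>
    hab (by rw [← neg_sub, neg_mem_iff]; exact QuotientAddGroup.eq_iff_sub_mem.mp he)
  intro x
  by_cases hxa : (x : G ⧸ L) = a
  · have hfx : ((cosetSwap L a b x : G) : G ⧸ L) = b := by simp [mk_cosetSwap, hxa]
    rw [cosetSwap_of_mk_eq_right (hfx ▸ hab.symm) hfx, cosetSwap_of_mk_eq_left hxa,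
      add_sub_cancel_right]
  by_cases hxb : (x : G ⧸ L) = b
  · have hfx : ((cosetSwap L a b x : G) : G ⧸ L) = a := by simp [mk_cosetSwap, hxb]
    rw [cosetSwap_of_mk_eq_left hfx, cosetSwap_of_mk_eq_right hxa hxb, sub_add_cancel]
  · rw [cosetSwap_of_mk_ne hxa hxb, cosetSwap_of_mk_ne hxa hxb]

theorem cosetSwap_sub_cosetSwap_mem_iff {H : AddSubgroup G} {T : Set G} (hab : b - a ∈ H)
    (hT : ∀ u m, u ∉ L → m ∈ H → u + m ∉ L → u ∈ T → u + m ∈ T) (x y : G) :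
    cosetSwap L a b x - cosetSwap L a b y ∈ T ↔ x - y ∈ T := by
  classical
  by_cases hxy : (x : G ⧸ L) = y
  · rw [sub_eq_sub_iff_sub_eq_sub.mpr (cosetSwap_sub_self_eq_of_mk_eq hxy)]
  have hL : x - y ∉ L := fun h => hxy (QuotientAddGroup.eq_iff_sub_mem.mpr h)
  have hfxy : cosetSwap L a b x - cosetSwap L a b y =
      x - y + ((cosetSwap L a b x - x) - (cosetSwap L a b y - y)) := by abel
  set m := (cosetSwap L a b x - x) - (cosetSwap L a b y - y)
  have hm : m ∈ H := sub_mem (cosetSwap_sub_self_mem hab x) (cosetSwap_sub_self_mem hab y)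
  have hmL : x - y + m ∉ L := by
    rw [← hfxy, ← QuotientAddGroup.eq_iff_sub_mem, mk_cosetSwap, mk_cosetSwap]
    exact fun h => hxy ((Equiv.swap _ _).injective h)
  rw [hfxy]
  refine ⟨fun h => ?_, hT _ m hL hm hmL⟩
  simpa using hT _ (-m) hmL (neg_mem hm) (by simpa using hL) h

end CosetSwap

theorem SimpleGraph.circulantGraph_adj_apply_iff {G : Type*} [AddGroup G] {s : Set G}
    {σ : G → G} (hσ : Function.Injective σ) (hs : ∀ x y, σ x - σ y ∈ s ↔ x - y ∈ s) (x y : G) :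
    (circulantGraph s).Adj (σ x) (σ y) ↔ (circulantGraph s).Adj x y := by
  simp only [circulantGraph_adj, hσ.ne_iff, hs]

theorem add_mem_image_add_right_sdiff {G : Type*} [AddCommGroup G] {S Ko H : Set G}
    {L : AddSubgroup G} {t : G} (htt : t + t = 0) (hKo : ∀ u, u ∈ Ko ↔ u + t ∈ L)
    (hsub : (S \ Ko) + H ⊆ S ∪ Ko) {u m : G} (hu : u ∉ L) (hm : m ∈ H) (hum : u + m ∉ L)
    (huT : u ∈ (· + t) '' (S \ {t})) : u + m ∈ (· + t) '' (S \ {t}) := by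
  obtain ⟨s, ⟨hs, -⟩, rfl⟩ := huT
  have hsm : s + m ∈ S ∪ Ko := hsub (Set.add_mem_add ⟨hs, by rwa [hKo]⟩ hm)
  refine ⟨s + m, ⟨hsm.resolve_right ?_, ?_⟩, add_right_comm s m t⟩
  · rwa [hKo, add_right_comm]
  · rintro (hsmt : s + m = t)
    exact hum (by rw [add_right_comm, hsmt, htt]; exact L.zero_mem)

theorem stmt17_general (h : ℕ) (hh : 0 < h) (S : Set (ZMod (4 * h)))
    (K : AddSubgroup (ZMod (4 * h)))
    (hK : ∃ k : ℕ, Odd k ∧ Nat.card K = 2 * k)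
    (hsub : (S \ oddPart K) +
        ((AddSubgroup.zmultiples ((h : ZMod (4 * h)))) : Set (ZMod (4 * h)))
      ⊆ S ∪ oddPart K) :
    ∃ σ : Equiv.Perm (ZMod (4 * h)),
      σ 0 = 0 ∧
      σ (((2 * h : ℕ) : ZMod (4 * h))) ≠ ((2 * h : ℕ) : ZMod (4 * h)) ∧
      ∀ x y : ZMod (4 * h),
        (circulantGraph
          ((· + ((2 * h : ℕ) : ZMod (4 * h))) ''
            (S \ {((2 * h : ℕ) : ZMod (4 * h))}))).Adj x y ↔
        (circulantGraph
          ((· + ((2 * h : ℕ) : ZMod (4 * h))) ''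
            (S \ {((2 * h : ℕ) : ZMod (4 * h))}))).Adj (σ x) (σ y) := by
  obtain ⟨k, hk, hKk⟩ := hK
  have : NeZero h := ⟨hh.ne'⟩
  set t : ZMod (4 * h) := ((2 * h : ℕ) : ZMod (4 * h))
  set c : ZMod (4 * h) := (h : ZMod (4 * h))
  have ht : ∀ x, 2 • x = 0 ↔ x = 0 ∨ x = t :=
    ZMod.two_nsmul_eq_zero_iff (m := 2 * h) (by ring)
  have htt : 2 • t = 0 := (ht t).mpr (Or.inr rfl)
  have htc : 2 • c = t := by simp [t, c, nsmul_eq_mul]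
  have ht0 : t ≠ 0 := by
    rw [Ne, ZMod.natCast_eq_zero_iff]
    exact fun hd => by have := Nat.le_of_dvd (by omega) hd; omega
  have hcK : c ∉ K := K.notMem_of_four_nsmul_eq_zero hk hKk (htc ▸ ht0)
    ((mul_nsmul c 2 2).trans (by rw [htc, htt]))
  set L := twoMulSubgroup K
  have hKo : ∀ u, u ∈ oddPart K ↔ u + t ∈ L := mem_oddPart_iff hk hKk ht ht0
  have htL : t ∉ L := by simpa using (hKo 0).not.mp (zero_notMem_oddPart K)
  have hcL : c ∉ L := fun hc => hcK (twoMulSubgroup_le hc)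
  have hct : c - t = -c := by rw [← htc, two_nsmul]; abel
  have hσ := cosetSwap_involutive (L := L) (by rwa [hct, neg_mem_iff])
  refine ⟨hσ.toPerm, cosetSwap_zero htL hcL, ?_, fun x y => (circulantGraph_adj_apply_iff
    hσ.injective (cosetSwap_sub_cosetSwap_mem_iff (hct ▸ neg_mem (AddSubgroup.mem_zmultiples c))
      fun _ _ hu hm hum => add_mem_image_add_right_sdiff (two_nsmul t ▸ htt) hKo hsub hu hm hum)
      x y).symm⟩
  rw [Function.Involutive.coe_toPerm, cosetSwap_left]
  intro he
  exact hcK (neg_eq_zero.mp (hct ▸ sub_eq_zero.mpr he) ▸ K.zero_mem)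

theorem stmt17 (h : ℕ) (hh : 0 < h) (S : Set (ZMod (4 * h)))
    (hS : ∀ s ∈ S, -s ∈ S) (h0 : (0 : ZMod (4 * h)) ∉ S)
    (K : AddSubgroup (ZMod (4 * h)))
    (hK : ∃ k : ℕ, Odd k ∧ Nat.card K = 2 * k)
    (hsub : (S \ oddPart K) +
        ((AddSubgroup.zmultiples ((h : ZMod (4 * h)))) : Set (ZMod (4 * h)))
      ⊆ S ∪ oddPart K) :
    ∃ σ : Equiv.Perm (ZMod (4 * h)),
      σ 0 = 0 ∧
      σ (((2 * h : ℕ) : ZMod (4 * h))) ≠ ((2 * h : ℕ) : ZMod (4 * h)) ∧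
      ∀ x y : ZMod (4 * h),
        (circulantGraph
          ((· + ((2 * h : ℕ) : ZMod (4 * h))) ''
            (S \ {((2 * h : ℕ) : ZMod (4 * h))}))).Adj x y ↔
        (circulantGraph
          ((· + ((2 * h : ℕ) : ZMod (4 * h))) ''
            (S \ {((2 * h : ℕ) : ZMod (4 * h))}))).Adj (σ x) (σ y) :=
  stmt17_general h hh S K hK hsub
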